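/- arXiv:2404.16920 — 3 statements merged into one kernel-verified Lean document; each statement's English description precedes it below -/
import Mathlib

section
/- Let X be a finite type, let K be a natural number, let T ≥ 2 be a natural number, and for each x ∈ X let C_x : ℕ → ℕ be a nondecreasing function with ∑_{x ∈ X} C_x(K) ≤ T. Then ∑_{x ∈ X} |{k ∈ {1, …, K} : C_x(k−1) ≥ 1 and C_x(k) > 2·C_x(k−1)}| ≤ |X| · log₂ T, where the left-hand side is interpreted as a real number. -/
open Finset

def growthSteps (b : ℕ) (f : ℕ → ℕ) (K : ℕ) : Finset ℕ :=
  (Icc 1 K).filter (fun k => 1 ≤ f (k - 1) ∧ f k > b * f (k - 1))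

lemma card_growthSteps_succ (b : ℕ) (f : ℕ → ℕ) (n : ℕ) :
    #(growthSteps b f (n + 1)) =
      #(growthSteps b f n) + if 1 ≤ f n ∧ f (n + 1) > b * f n then 1 else 0 := by
  simp only [growthSteps, card_filter]
  rw [sum_Icc_succ_top (by omega), Nat.add_sub_cancel]

/-- Each growth step raises `Nat.log b ∘ f` by at least one, and it never decreases. -/
lemma card_growthSteps_le_log {b : ℕ} (hb : 1 < b) {f : ℕ → ℕ} (hf : Monotone f) (K : ℕ) :
    #(growthSteps b f K) ≤ Nat.log b (f K) := by
  induction K with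
  | zero => simp [growthSteps]
  | succ n ih =>
    rw [card_growthSteps_succ]
    split_ifs with hgrow
    · obtain ⟨hpos, hjump⟩ := hgrow
      calc #(growthSteps b f n) + 1 ≤ Nat.log b (f n) + 1 := by omega
        _ = Nat.log b (f n * b) := (Nat.log_mul_base hb (by omega)).symm
        _ ≤ Nat.log b (f (n + 1)) := Nat.log_mono_right (by rw [mul_comm]; omega)
    · exact ih.trans (Nat.log_mono_right (hf n.le_succ))

theorem macro_episode_total_bound_general (X : Type*) [Fintype X] (K T : ℕ)
    (C : X → ℕ → ℕ) (hC : ∀ x, Monotone (C x))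
    (hsum : ∑ x, C x K ≤ T) :
    (∑ x, ((((Finset.Icc 1 K).filter
        (fun k => 1 ≤ C x (k - 1) ∧ C x k > 2 * C x (k - 1))).card : ℝ)))
      ≤ (Fintype.card X : ℝ) * Real.logb 2 T := by
  have hpair (x : X) : (#(growthSteps 2 (C x) K) : ℝ) ≤ Real.logb 2 T := by
    have hCT : C x K ≤ T :=
      (single_le_sum (f := fun x => C x K) (fun _ _ => Nat.zero_le _) (mem_univ x)).trans hsum
    calc (#(growthSteps 2 (C x) K) : ℝ) ≤ Nat.log 2 T := by
          exact_mod_cast (card_growthSteps_le_log one_lt_two (hC x) K).trans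
            (Nat.log_mono_right hCT)
      _ ≤ Real.logb 2 T := by exact_mod_cast Real.natLog_le_logb T 2
  calc _ ≤ ∑ _x : X, Real.logb 2 T := sum_le_sum fun x _ => hpair x
    _ = (Fintype.card X : ℝ) * Real.logb 2 T := by rw [sum_const, card_univ, nsmul_eq_mul]

/-- Macro-episode count bound: with `C x` nondecreasing and `∑ x, C x K ≤ T`,
the total number of doubling episodes is at most `|X| · log₂ T`. -/
theorem macro_episode_total_bound (X : Type*) [Fintype X] (K T : ℕ) (hT : 2 ≤ T)
    (C : X → ℕ → ℕ) (hC : ∀ x, Monotone (C x))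
    (hsum : ∑ x, C x K ≤ T) :
    (∑ x, ((((Finset.Icc 1 K).filter
        (fun k => 1 ≤ C x (k - 1) ∧ C x k > 2 * C x (k - 1))).card : ℝ)))
      ≤ (Fintype.card X : ℝ) * Real.logb 2 T :=
  macro_episode_total_bound_general X K T C hC hsum
end

section
/- Let X be a finite type, let T be a natural number, and let x : {1, …, T} → X be any sequence. For each t ∈ {1, …, T} let N_t = |{s ∈ {1, …, t−1} : x_s = x_t}| be the number of earlier occurrences of the value x_t. Then ∑_{t=1}^{T} 1/√(max(1, N_t)) ≤ 3·√(|X| · T). -/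
open Finset

/-! Group the times by the visited value `a`. The times with `x t = a` carry the visit counts
`0, 1, …, n_a - 1` in increasing order, so they contribute `∑_{k < n_a} 1/√(max 1 k) ≤ 3 √n_a`.
Cauchy–Schwarz then gives `∑_a √n_a ≤ √(|X| ∑_a n_a) = √(|X| T)`. -/

theorem Finset.sum_card_filter_lt_eq_sum_range {α M : Type*} [LinearOrder α] [AddCommMonoid M]
    (s : Finset α) (f : ℕ → M) :
    ∑ t ∈ s, f #{u ∈ s | u < t} = ∑ k ∈ range #s, f k := by
  induction s using Finset.induction_on_max with
  | empty => simp
  | insert a s ha ih =>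
    have ha' : a ∉ s := fun h => lt_irrefl a (ha a h)
    have below : ∀ t ∈ s, {u ∈ insert a s | u < t} = {u ∈ s | u < t} := fun t ht => by
      rw [filter_insert, if_neg (ha t ht).not_gt]
    have top : {u ∈ insert a s | u < a} = s := by
      rw [filter_insert, if_neg (lt_irrefl a), filter_true_of_mem ha]
    rw [sum_insert ha', card_insert_of_notMem ha', sum_range_succ, top, sum_congr rfl
      fun t ht => congrArg f (congrArg card (below t ht)), ih, add_comm]

lemma inv_sqrt_add_three_mul_sqrt_le {y : ℝ} (hy : 1 ≤ y) :
    1 / √y + 3 * √y ≤ 3 * √(y + 1) := by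
  have ha : 1 ≤ √y := Real.one_le_sqrt.mpr hy
  have hb : √(y + 1) ^ 2 = √y ^ 2 + 1 := by
    rw [Real.sq_sqrt (by linarith), Real.sq_sqrt (by linarith)]
  rw [div_add' _ _ _ (by positivity), div_le_iff₀ (by positivity)]
  -- multiplied by this factor, the negated goal becomes `3 (√y)^2 < 1`
  have hpos : 0 < 3 * √y * √(y + 1) + 1 + 3 * √y * √y := by positivity
  nlinarith

lemma sum_range_inv_sqrt_max_one_le (n : ℕ) :
    ∑ k ∈ range n, (1 : ℝ) / √((max 1 k : ℕ)) ≤ 3 * √n := by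
  induction n with
  | zero => simp
  | succ n ih =>
    rw [sum_range_succ, Nat.cast_succ]
    rcases Nat.eq_zero_or_pos n with rfl | hn
    · norm_num
    · rw [max_eq_right hn]
      linarith [inv_sqrt_add_three_mul_sqrt_le (y := n) (by exact_mod_cast hn)]

lemma sum_sqrt_le_sqrt_card_mul_sum {ι : Type*} (s : Finset ι) {f : ι → ℝ}
    (hf : ∀ i, 0 ≤ f i) : ∑ i ∈ s, √(f i) ≤ √(#s * ∑ i ∈ s, f i) := by
  simpa [Real.sqrt_mul (Nat.cast_nonneg _)] using
    Real.sum_sqrt_mul_sqrt_le s (fun _ => zero_le_one) hf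

lemma filter_Icc_one_sub_one_eq_filter_lt {X : Type*} [DecidableEq X] (x : ℕ → X) {T t : ℕ}
    {a : X} (ht : t ∈ {s ∈ Icc 1 T | x s = a}) :
    {s ∈ Icc 1 (t - 1) | x s = x t} = {u ∈ {s ∈ Icc 1 T | x s = a} | u < t} := by
  ext u
  simp only [mem_filter, mem_Icc] at ht ⊢
  grind

/-- Visit-count summation bound: for any sequence `x : {1,…,T} → X` with
`N t` the number of earlier occurrences of the value `x t`,
`∑_{t=1}^T 1/√(max 1 (N t)) ≤ 3 √(|X| T)`. -/
theorem visit_count_summation_bound (X : Type*) [Fintype X] [DecidableEq X]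
    (T : ℕ) (x : ℕ → X) :
    ∑ t ∈ Finset.Icc 1 T,
        (1 : ℝ) / Real.sqrt ((max 1
          (((Finset.Icc 1 (t - 1)).filter (fun s => x s = x t)).card) : ℕ))
      ≤ 3 * Real.sqrt ((Fintype.card X : ℝ) * T) := by
  set f : ℕ → ℝ := fun k => 1 / √((max 1 k : ℕ))
  set visits : X → Finset ℕ := fun a => {t ∈ Icc 1 T | x t = a}
  have total : ∑ a, (#(visits a) : ℝ) = T := by
    rw [← Nat.cast_sum, ← card_eq_sum_card_fiberwise fun t _ => mem_univ (x t), Nat.card_Icc,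
      Nat.add_sub_cancel]
  calc ∑ t ∈ Icc 1 T, f #{s ∈ Icc 1 (t - 1) | x s = x t}
      = ∑ a, ∑ t ∈ visits a, f #{s ∈ Icc 1 (t - 1) | x s = x t} := (sum_fiberwise _ _ _).symm
    _ = ∑ a, ∑ k ∈ range #(visits a), f k := sum_congr rfl fun a _ => by
        rw [← sum_card_filter_lt_eq_sum_range]
        exact sum_congr rfl fun t ht => by rw [filter_Icc_one_sub_one_eq_filter_lt x ht]
    _ ≤ ∑ a, 3 * √(#(visits a)) := sum_le_sum fun a _ => sum_range_inv_sqrt_max_one_le _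
    _ = 3 * ∑ a, √(#(visits a)) := (mul_sum _ _ _).symm
    _ ≤ 3 * √(Fintype.card X * T) := by
        gcongr
        simpa [total] using sum_sqrt_le_sqrt_card_mul_sum univ fun a => (#(visits a)).cast_nonneg
end

section
/- Let K ≥ 1 and γ ≥ 1 be natural numbers, let T_0, T_1, …, T_K be positive integers with ∑_{k=1}^{K} T_k = T, and let indices 1 = n_1 < n_2 < … < n_γ ≤ K be given, with the convention n_{γ+1} = K + 1. Assume that for every i ∈ {1, …, γ} and every k with n_i ≤ k ≤ n_{i+1} − 2, one has T_k = T_{k−1} + 1. Then K ≤ √(2 γ T). -/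
/-!
Write `L i = n (i + 1) - n i` for the length of the `i`-th macro episode. Inside it the episode
lengths are at least `2, 3, …, L i`, and the last one is at least `1`, so the macro episode lasts
at least `L i (L i + 1) / 2 ≥ L i ^ 2 / 2` steps; hence `∑ L i ^ 2 ≤ 2 T`. Since `∑ L i = K`,
Cauchy–Schwarz gives `K ^ 2 ≤ γ ∑ L i ^ 2 ≤ 2 γ T`.
-/

open Finset

theorem Finset.sum_Ico_eq_sum_sum_Ico {M : Type*} [AddCommMonoid M] (f : ℕ → M) {a : ℕ → ℕ}
    {p q : ℕ} (hpq : p ≤ q) (ha : MonotoneOn a (Set.Icc p q)) :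
    ∑ k ∈ Ico (a p) (a q), f k = ∑ i ∈ Ico p q, ∑ k ∈ Ico (a i) (a (i + 1)), f k := by
  induction q, hpq using Nat.le_induction with
  | base => simp
  | succ q hpq ih =>
    rw [sum_Ico_succ_top hpq, ← ih (ha.mono (Set.Icc_subset_Icc_right q.le_succ)),
      sum_Ico_consecutive _ (ha ⟨le_rfl, by omega⟩ ⟨hpq, q.le_succ⟩ hpq)
        (ha ⟨hpq, q.le_succ⟩ ⟨by omega, le_rfl⟩ q.le_succ)]

theorem Nat.two_mul_sum_range_add_two (s : ℕ) : 2 * ∑ j ∈ range s, (j + 2) = s * (s + 3) := by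
  induction s with
  | zero => simp
  | succ s ih => rw [sum_range_succ, mul_add, ih]; ring

theorem Nat.sq_le_two_mul_sum_range {g : ℕ → ℕ} {m : ℕ} (hg : ∀ j < m, j + 2 ≤ g j)
    (hlast : 0 < g m) : (m + 1) ^ 2 ≤ 2 * ∑ j ∈ range (m + 1), g j := by
  have hlow : ∑ j ∈ range m, (j + 2) ≤ ∑ j ∈ range m, g j :=
    sum_le_sum fun j hj => hg j (mem_range.mp hj)
  have := Nat.two_mul_sum_range_add_two m
  rw [sum_range_succ]
  nlinarith

theorem Nat.add_le_of_succ_step {f : ℕ → ℕ} {c m : ℕ}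
    (hstep : ∀ j < m, f (c + j + 1) = f (c + j) + 1) : ∀ j ≤ m, f c + j ≤ f (c + j) := by
  intro j hj
  induction j with
  | zero => simp
  | succ j ih =>
    rw [← add_assoc, ← add_assoc, hstep j hj]
    exact Nat.add_le_add_right (ih (by omega)) 1

theorem Nat.sq_sub_le_two_mul_sum_Ico {f : ℕ → ℕ} {a b : ℕ} (ha : 1 ≤ a) (hab : a ≤ b)
    (hgrow : ∀ k, a ≤ k → k ≤ b - 2 → f k = f (k - 1) + 1)
    (hpos : ∀ k, a - 1 ≤ k → k ≤ b - 1 → 0 < f k) :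
    (b - a) ^ 2 ≤ 2 * ∑ k ∈ Ico a b, f k := by
  obtain rfl | hlt := hab.eq_or_lt
  · simp
  obtain ⟨m, rfl⟩ := Nat.exists_eq_add_of_lt hlt
  have hstep : ∀ j < m, f (a - 1 + j + 1) = f (a - 1 + j) + 1 := fun j hj => by
    rw [hgrow (a - 1 + j + 1) (by omega) (by omega), Nat.add_sub_cancel]
  have hlen := Nat.add_le_of_succ_step hstep
  have hstart := hpos (a - 1) le_rfl (by omega)
  rw [sum_Ico_eq_sum_range, show a + m + 1 - a = m + 1 by omega]
  refine Nat.sq_le_two_mul_sum_range (fun j hj => ?_) (hpos _ (by omega) (by omega))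
  have := hlen (j + 1) hj
  rw [show a - 1 + (j + 1) = a + j by omega] at this
  omega

theorem episode_count_core_general (K γ T : ℕ)
    (Tl : ℕ → ℕ) (hpos : ∀ k ≤ K, 0 < Tl k)
    (hsum : ∑ k ∈ Finset.Icc 1 K, Tl k = T)
    (n : ℕ → ℕ) (hn1 : n 1 = 1)
    (hmono : ∀ i, 1 ≤ i → i < γ → n i < n (i + 1))
    (hnγ : n γ ≤ K) (hnγ1 : n (γ + 1) = K + 1)
    (hgrow : ∀ i, 1 ≤ i → i ≤ γ → ∀ k, n i ≤ k → k ≤ n (i + 1) - 2 →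
      Tl k = Tl (k - 1) + 1) :
    (K : ℝ) ≤ Real.sqrt (2 * γ * T) := by
  have hn : MonotoneOn n (Set.Icc 1 (γ + 1)) := by
    refine monotoneOn_of_le_add_one Set.ordConnected_Icc fun i _ hi hi' => ?_
    obtain hlt | rfl := (Nat.le_of_succ_le_succ hi'.2).lt_or_eq
    · exact (hmono i hi.1 hlt).le
    · omega
  have hpart := fun f : ℕ → ℕ => sum_Ico_eq_sum_sum_Ico f (by omega : 1 ≤ γ + 1) hn
  have hK : K = ∑ i ∈ Ico 1 (γ + 1), (n (i + 1) - n i) := by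
    simpa [hn1, hnγ1] using hpart fun _ => 1
  have hT : T = ∑ i ∈ Ico 1 (γ + 1), ∑ k ∈ Ico (n i) (n (i + 1)), Tl k := by
    rw [← hpart, hn1, hnγ1, Ico_add_one_right_eq_Icc, hsum]
  have hblock : ∀ i ∈ Ico 1 (γ + 1),
      (n (i + 1) - n i) ^ 2 ≤ 2 * ∑ k ∈ Ico (n i) (n (i + 1)), Tl k := by
    intro i hi
    obtain ⟨hi₁, hi₂⟩ := mem_Ico.mp hi
    have h₁ : n 1 ≤ n i := hn ⟨le_rfl, by omega⟩ ⟨hi₁, by omega⟩ hi₁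
    have h₂ : n i ≤ n (i + 1) := hn ⟨hi₁, by omega⟩ ⟨by omega, hi₂⟩ i.le_succ
    have h₃ : n (i + 1) ≤ n (γ + 1) := hn ⟨by omega, hi₂⟩ ⟨by omega, le_rfl⟩ hi₂
    exact Nat.sq_sub_le_two_mul_sum_Ico (by omega) h₂ (hgrow i hi₁ (by omega))
      fun k _ hk => hpos k (by omega)
  have hsq : K ^ 2 ≤ 2 * γ * T := calc
    K ^ 2 ≤ #(Ico 1 (γ + 1)) * ∑ i ∈ Ico 1 (γ + 1), (n (i + 1) - n i) ^ 2 :=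
      hK ▸ sq_sum_le_card_mul_sum_sq
    _ ≤ γ * ∑ i ∈ Ico 1 (γ + 1), 2 * ∑ k ∈ Ico (n i) (n (i + 1)), Tl k := by
      rw [Nat.card_Ico, Nat.add_sub_cancel]
      exact Nat.mul_le_mul_left _ (sum_le_sum hblock)
    _ = 2 * γ * T := by rw [hT, ← mul_sum]; ring
  exact (le_abs_self _).trans (Real.abs_le_sqrt (by exact_mod_cast hsq))

/-- Combinatorial core of the episode-count lemma: episode lengths grow by one
within each macro episode, so `K ≤ √(2 γ T)`. -/
theorem episode_count_core (K γ T : ℕ) (hK : 1 ≤ K) (hγ : 1 ≤ γ)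
    (Tl : ℕ → ℕ) (hpos : ∀ k ≤ K, 0 < Tl k)
    (hsum : ∑ k ∈ Finset.Icc 1 K, Tl k = T)
    (n : ℕ → ℕ) (hn1 : n 1 = 1)
    (hmono : ∀ i, 1 ≤ i → i < γ → n i < n (i + 1))
    (hnγ : n γ ≤ K) (hnγ1 : n (γ + 1) = K + 1)
    (hgrow : ∀ i, 1 ≤ i → i ≤ γ → ∀ k, n i ≤ k → k ≤ n (i + 1) - 2 →
      Tl k = Tl (k - 1) + 1) :
    (K : ℝ) ≤ Real.sqrt (2 * γ * T) :=
  episode_count_core_general K γ T Tl hpos hsum n hn1 hmono hnγ hnγ1 hgrow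
end
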